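/- If π' covers π in the partition lattice of a finite set X, and π' is obtained by merging blocks B_i and B_j of π, then 𝔑(π') ≥ |B_i|·|B_j|·𝔑(π), with equality if and only if both B_i and B_j are singletons. -/

import Mathlib

/-!
Atoms of the partition lattice are the pairs `{p, q}`. Adding to a minimal atomic decomposition `S`
of `π` an atom `{p, q}` with `p ∈ Bi`, `q ∈ Bj` gives a minimal atomic decomposition of `π'`, from
which `(p, q, S)` is recovered as its only atom not below `π`; this injection gives the inequality.
If `Bi = {x}` and `Bj = {y}`, every minimal decomposition of `π'` must contain `{x, y}`, and
removing it leaves one of `π`, so the injection is onto. If instead `u ≠ v` lie in `Bi`, choose a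
minimal decomposition `S` of `π` containing `{u, v}`, replace `{u, v}` by `{u, y}` and `{v, y}`, and
shrink to a minimal decomposition of `π'`: neither new atom can be dropped, so the result has two
atoms not below `π` and is missed by the injection.
-/

variable {X : Type*} [Fintype X] [DecidableEq X]

/-- The atom of the partition lattice whose only nonsingleton block is `{x, y}`. -/
def pairSetoid (x y : X) : Setoid X where
  r a b := a = b ∨ (a = x ∧ b = y) ∨ (a = y ∧ b = x)
  iseqv := by
    refine ⟨fun a => Or.inl rfl, ?_, ?_⟩
    · intro a b h; tauto
    · intro a b c h1 h2; aesop

/-- `S` is an atomic decomposition of the partition `π`. -/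
def IsAtomicDecomp (π : Setoid X) (S : Set (Setoid X)) : Prop :=
  (∀ a ∈ S, IsAtom a) ∧ sSup S = π

/-- `S` is a minimal atomic decomposition of `π`. -/
def IsMinAtomicDecomp (π : Setoid X) (S : Set (Setoid X)) : Prop :=
  IsAtomicDecomp π S ∧ ∀ T ⊂ S, ¬ IsAtomicDecomp π T

/-- `𝔑 π`: the number of minimal atomic decompositions of `π`. -/
noncomputable def numMinDecomp (π : Setoid X) : ℕ :=
  {S | IsMinAtomicDecomp π S}.ncard

/-- The graph on `X` whose edges are the nonsingleton blocks of the atoms in `S`. -/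
def atomGraph (S : Set (Setoid X)) : SimpleGraph X where
  Adj a b := a ≠ b ∧ pairSetoid a b ∈ S
  symm := by
    constructor
    intro a b ⟨h1, h2⟩
    refine ⟨h1.symm, ?_⟩
    have h : pairSetoid b a = pairSetoid a b := by
      apply Setoid.ext; intro u v
      show _ ∨ _ ↔ _ ∨ _; tauto
    rw [h]; exact h2
  loopless := by constructor; intro a ⟨h, _⟩; exact h rfl

section Decomposition

omit [Fintype X] [DecidableEq X]

variable {π : Setoid X} {S : Set (Setoid X)} {a : Setoid X}

theorem isMinAtomicDecomp_iff_minimal : IsMinAtomicDecomp π S ↔ Minimal (IsAtomicDecomp π) S :=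
  Set.minimal_iff_forall_ssubset.symm

theorem sSup_eq_sup_sSup_diff (ha : a ∈ S) : sSup S = a ⊔ sSup (S \ {a}) := by
  rw [← sSup_insert, Set.insert_sdiff_singleton, Set.insert_eq_of_mem ha]

theorem isMinAtomicDecomp_iff :
    IsMinAtomicDecomp π S ↔ IsAtomicDecomp π S ∧ ∀ a ∈ S, ¬ a ≤ sSup (S \ {a}) := by
  refine and_congr_right fun hS => ⟨fun hmin a ha hle => ?_, fun hind T hTS hT => ?_⟩
  · refine hmin _ (Set.sdiff_singleton_ssubset.2 ha) ⟨fun b hb => hS.1 b hb.1, ?_⟩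
    rw [← hS.2, sSup_eq_sup_sSup_diff ha, sup_eq_right.2 hle]
  · obtain ⟨a, haS, haT⟩ := Set.exists_of_ssubset hTS
    refine hind a haS ((le_sSup haS).trans ?_)
    rw [hS.2, ← hT.2]
    exact sSup_le_sSup (Set.subset_sdiff_singleton hTS.subset haT)

theorem IsMinAtomicDecomp.le (hS : IsMinAtomicDecomp π S) (ha : a ∈ S) : a ≤ π :=
  hS.1.2 ▸ le_sSup ha

theorem Setoid.not_rel_of_rel_of_rel {x y p q : X} (hxy : ¬ π x y) (hp : π p x) (hq : π q y) :
    ¬ π p q :=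
  fun hpq => hxy (π.trans' (π.trans' (π.symm' hp) hpq) hq)

theorem exists_mem_rel_ne_of_sSup_rel {p q : X} (h : sSup S p q) (hpq : p ≠ q) :
    ∃ a ∈ S, ∃ z, z ≠ p ∧ a p z := by
  by_contra! hS
  -- otherwise every member of `S`, hence `sSup S`, refines the partition `{{p}, X \ {p}}`
  have hle : sSup S ≤ Setoid.ker (· = p) := sSup_le fun a ha u v huv =>
    Setoid.ker_def.2 (propext ⟨fun hu => by_contra fun hv => hS a ha v hv (hu ▸ huv),
      fun hv => by_contra fun hu => hS a ha u hu (hv ▸ a.symm huv)⟩)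
  exact hpq ((Setoid.ker_def.1 (hle h)).mp rfl).symm

theorem Set.ncard_eq_one_iff_subsingleton_of_mem {α : Type*} {s : Set α} {a : α} (ha : a ∈ s) :
    s.ncard = 1 ↔ s.Subsingleton := by
  refine ⟨fun h => ?_, fun h => by rw [h.eq_singleton_of_mem ha, Set.ncard_singleton]⟩
  obtain ⟨b, rfl⟩ := Set.ncard_eq_one.1 h
  exact Set.subsingleton_singleton

end Decomposition

section PairSetoid

omit [Fintype X]

variable {x y p q : X} {π σ : Setoid X}

theorem pairSetoid_rel (x y : X) : pairSetoid x y x y :=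
  Or.inr (Or.inl ⟨rfl, rfl⟩)

theorem pairSetoid_comm (x y : X) : pairSetoid x y = pairSetoid y x :=
  Setoid.ext fun _ _ => by show _ ∨ _ ↔ _ ∨ _; tauto

theorem pairSetoid_le_iff : pairSetoid x y ≤ σ ↔ σ x y := by
  refine ⟨fun h => h (pairSetoid_rel x y), fun h a b hab => ?_⟩
  rcases hab with rfl | ⟨rfl, rfl⟩ | ⟨rfl, rfl⟩
  exacts [σ.refl' a, h, σ.symm' h]

theorem pairSetoid_inj (hpq : p ≠ q) :
    pairSetoid p q = pairSetoid x y ↔ (p = x ∧ q = y) ∨ (p = y ∧ q = x) := by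
  refine ⟨fun h => ?_, ?_⟩
  · have hrel : pairSetoid x y p q := h ▸ pairSetoid_rel p q
    exact hrel.resolve_left hpq
  · rintro (⟨rfl, rfl⟩ | ⟨rfl, rfl⟩)
    exacts [rfl, pairSetoid_comm p q]

theorem pairSetoid_ne_bot (h : x ≠ y) : pairSetoid x y ≠ ⊥ :=
  fun hbot => h (pairSetoid_le_iff.1 hbot.le)

omit [DecidableEq X] in
theorem Setoid.exists_rel_ne_of_ne_bot {a : Setoid X} (ha : a ≠ ⊥) : ∃ p q, p ≠ q ∧ a p q := by
  by_contra! h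
  exact ha (eq_bot_iff.2 fun p q hpq => by_contra fun hne => h p q hne hpq)

theorem isAtom_pairSetoid (h : x ≠ y) : IsAtom (pairSetoid x y) := by
  refine ⟨pairSetoid_ne_bot h, fun b hb => by_contra fun hb0 => ?_⟩
  obtain ⟨u, v, huv, hbuv⟩ := Setoid.exists_rel_ne_of_ne_bot hb0
  have hbxy : b x y := by
    rcases hb.le hbuv with huv' | ⟨rfl, rfl⟩ | ⟨rfl, rfl⟩
    exacts [absurd huv' huv, hbuv, b.symm' hbuv]
  exact hb.not_ge (pairSetoid_le_iff.2 hbxy)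

theorem IsAtom.eq_pairSetoid {a : Setoid X} (ha : IsAtom a) (hpq : p ≠ q) (h : a p q) :
    a = pairSetoid p q :=
  ((ha.le_iff.1 (pairSetoid_le_iff.2 h)).resolve_left (pairSetoid_ne_bot hpq)).symm

theorem IsAtom.exists_eq_pairSetoid {a : Setoid X} (ha : IsAtom a) :
    ∃ p q, p ≠ q ∧ a = pairSetoid p q := by
  obtain ⟨p, q, hpq, h⟩ := Setoid.exists_rel_ne_of_ne_bot ha.1
  exact ⟨p, q, hpq, ha.eq_pairSetoid hpq h⟩

omit [DecidableEq X] in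
theorem Setoid.isAtomistic : IsAtomistic (Setoid X) := by
  classical
  refine CompleteLattice.isAtomistic_iff.2 fun π => ⟨{a | IsAtom a ∧ a ≤ π}, ?_, fun _ ha => ha.1⟩
  refine le_antisymm (fun p q hpq => ?_) (sSup_le fun _ ha => ha.2)
  by_cases hpq' : p = q
  · exact hpq' ▸ Setoid.refl' _ p
  · have hmem : pairSetoid p q ∈ {a | IsAtom a ∧ a ≤ π} :=
      ⟨isAtom_pairSetoid hpq', pairSetoid_le_iff.2 hpq⟩
    exact le_sSup hmem (pairSetoid_rel p q)

instance : IsAtomistic (Setoid X) := Setoid.isAtomistic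

theorem sup_pairSetoid_rel (h : (σ ⊔ pairSetoid x y) p q) :
    σ p q ∨ (σ p x ∧ σ y q) ∨ (σ p y ∧ σ x q) := by
  classical
  -- `g` merges the `σ`-class of `y` into that of `x`
  let g : X → Quotient σ := fun a => if σ a y then Quotient.mk σ x else Quotient.mk σ a
  have hg : σ ⊔ pairSetoid x y ≤ Setoid.ker g := by
    refine sup_le (fun a b hab => Setoid.ker_def.2 ?_) (pairSetoid_le_iff.2 (Setoid.ker_def.2 ?_))
    · by_cases ha : σ a y
      · simp [g, ha, σ.trans' (σ.symm' hab) ha]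
      · have hb : ¬ σ b y := fun hb => ha (σ.trans' hab hb)
        simpa [g, ha, hb] using Quotient.sound hab
    · simp [g]
  have hpq := Setoid.ker_def.1 (hg h)
  by_cases hp : σ p y <;> by_cases hq : σ q y <;> simp only [g, hp, hq, if_true, if_false] at hpq
  · exact Or.inl (σ.trans' hp (σ.symm' hq))
  · exact Or.inr (Or.inr ⟨hp, Quotient.exact hpq⟩)
  · exact Or.inr (Or.inl ⟨Quotient.exact hpq, σ.symm' hq⟩)
  · exact Or.inl (Quotient.exact hpq)

end PairSetoid

section Extension

omit [Fintype X]

variable {x y p q u v : X} {π σ : Setoid X} {S U : Set (Setoid X)} {a : Setoid X}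

theorem le_of_le_pairSetoid_sup (hxy : ¬ π x y) (hσ : σ ≤ π) (h : π ≤ pairSetoid x y ⊔ σ) :
    π ≤ σ := by
  rw [sup_comm] at h
  intro p q hpq
  rcases sup_pairSetoid_rel (h hpq) with hpq' | ⟨hpx, hyq⟩ | ⟨hpy, hxq⟩
  · exact hpq'
  · exact absurd hpq (Setoid.not_rel_of_rel_of_rel hxy (hσ hpx) (π.symm' (hσ hyq)))
  · exact absurd (π.symm' hpq) (Setoid.not_rel_of_rel_of_rel hxy (π.symm' (hσ hxq)) (hσ hpy))

theorem sup_pairSetoid_eq_of_rel (hp : π p x) (hq : π q y) :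
    π ⊔ pairSetoid p q = π ⊔ pairSetoid x y := by
  have key : ∀ {p q x y : X}, π p x → π q y → π ⊔ pairSetoid p q ≤ π ⊔ pairSetoid x y := by
    intro p q x y hp hq
    refine sup_le le_sup_left (pairSetoid_le_iff.2 ?_)
    have hπ : π ≤ π ⊔ pairSetoid x y := le_sup_left
    have hxy : (π ⊔ pairSetoid x y) x y := (le_sup_right : pairSetoid x y ≤ _) (pairSetoid_rel x y)
    exact Setoid.trans' _ (Setoid.trans' _ (hπ hp) hxy) (hπ (π.symm' hq))
  exact le_antisymm (key hp hq) (key (π.symm' hp) (π.symm' hq))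

theorem IsMinAtomicDecomp.not_le_pairSetoid_sup_sSup_diff (hS : IsMinAtomicDecomp π S)
    (ha : a ∈ S) (hxy : ¬ π x y) : ¬ π ≤ pairSetoid x y ⊔ sSup (S \ {a}) := fun h =>
  (isMinAtomicDecomp_iff.1 hS).2 a ha
    ((hS.le ha).trans (le_of_le_pairSetoid_sup hxy (hS.1.2 ▸ sSup_le_sSup Set.sdiff_subset) h))

theorem IsMinAtomicDecomp.insert_pairSetoid (hS : IsMinAtomicDecomp π S) (hxy : ¬ π x y) :
    IsMinAtomicDecomp (π ⊔ pairSetoid x y) (insert (pairSetoid x y) S) := by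
  have hxyS : pairSetoid x y ∉ S := fun h => hxy (pairSetoid_le_iff.1 (hS.le h))
  refine isMinAtomicDecomp_iff.2 ⟨⟨?_, ?_⟩, ?_⟩
  · rintro a (rfl | ha)
    exacts [isAtom_pairSetoid fun h => hxy (h ▸ π.refl' x), hS.1.1 a ha]
  · rw [sSup_insert, hS.1.2, sup_comm]
  · rintro a (rfl | ha) hle
    · rw [Set.insert_sdiff_self_of_notMem hxyS, hS.1.2] at hle
      exact hxy (pairSetoid_le_iff.1 hle)
    · have hxya : pairSetoid x y ∉ ({a} : Set (Setoid X)) := fun h => hxyS (h ▸ ha)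
      rw [Set.insert_sdiff_of_notMem _ hxya, sSup_insert] at hle
      refine hS.not_le_pairSetoid_sup_sSup_diff ha hxy ?_
      rw [← hS.1.2, sSup_eq_sup_sSup_diff ha]
      exact sup_le hle le_sup_right

theorem IsMinAtomicDecomp.sdiff_pairSetoid (hU : IsMinAtomicDecomp (π ⊔ pairSetoid x y) U)
    (hxy : ¬ π x y) (hxyU : pairSetoid x y ∈ U) (hle : ∀ a ∈ U, a ≠ pairSetoid x y → a ≤ π) :
    IsMinAtomicDecomp π (U \ {pairSetoid x y}) := by
  have hσ : sSup (U \ {pairSetoid x y}) ≤ π := sSup_le fun a ha => hle a ha.1 ha.2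
  refine isMinAtomicDecomp_iff.2
    ⟨⟨fun a ha => hU.1.1 a ha.1, le_antisymm hσ ?_⟩, fun a ha ha' => ?_⟩
  · refine le_of_le_pairSetoid_sup hxy hσ ?_
    rw [← sSup_eq_sup_sSup_diff hxyU, hU.1.2]
    exact le_sup_left
  · exact (isMinAtomicDecomp_iff.1 hU).2 a ha.1
      (ha'.trans (sSup_le_sSup (Set.sdiff_subset_sdiff_left Set.sdiff_subset)))

theorem IsAtomicDecomp.exchange (hS : IsAtomicDecomp π S) (huv : pairSetoid u v ∈ S)
    (hu : π u x) (hxy : ¬ π x y) :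
    IsAtomicDecomp (π ⊔ pairSetoid x y)
      (insert (pairSetoid u y) (insert (pairSetoid v y) (S \ {pairSetoid u v}))) := by
  have hvu : π v u := π.symm' ((hS.2 ▸ le_sSup huv : pairSetoid u v ≤ π) (pairSetoid_rel u v))
  have hu' : π ⊔ pairSetoid u y = π ⊔ pairSetoid x y := sup_pairSetoid_eq_of_rel hu (π.refl' y)
  have hv' : π ⊔ pairSetoid v y = π ⊔ pairSetoid x y :=
    sup_pairSetoid_eq_of_rel (π.trans' hvu hu) (π.refl' y)
  have hne : ∀ {w}, π w x → w ≠ y := fun hw hwy => hxy (π.symm' (hwy ▸ hw))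
  refine ⟨?_, le_antisymm (sSup_le ?_) ?_⟩
  · rintro a (rfl | rfl | ha)
    exacts [isAtom_pairSetoid (hne hu), isAtom_pairSetoid (hne (π.trans' hvu hu)), hS.1 a ha.1]
  · rintro a (rfl | rfl | ha)
    · exact hu' ▸ le_sup_right
    · exact hv' ▸ le_sup_right
    · exact ((hS.2 ▸ le_sSup ha.1 : a ≤ π)).trans le_sup_left
  · set T := insert (pairSetoid u y) (insert (pairSetoid v y) (S \ {pairSetoid u v}))
    have huy : pairSetoid u y ≤ sSup T := le_sSup (Set.mem_insert _ _)
    have hvy : pairSetoid v y ≤ sSup T := le_sSup (Set.mem_insert_of_mem _ (Set.mem_insert _ _))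
    have huv' : pairSetoid u v ≤ sSup T := pairSetoid_le_iff.2
      (Setoid.trans' _ (pairSetoid_le_iff.1 huy) (Setoid.symm' _ (pairSetoid_le_iff.1 hvy)))
    rw [← hu', ← hS.2, sSup_eq_sup_sSup_diff huv]
    have hsub : S \ {pairSetoid u v} ⊆ T := (Set.subset_insert _ _).trans (Set.subset_insert _ _)
    exact sup_le (sup_le huv' (sSup_le_sSup hsub)) huy

theorem IsMinAtomicDecomp.pairSetoid_mem_of_subsingleton
    (hU : IsMinAtomicDecomp (π ⊔ pairSetoid x y) U) (hxy : ¬ π x y)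
    (hx : {p | π p x}.Subsingleton) (hy : {q | π q y}.Subsingleton) :
    pairSetoid x y ∈ U ∧ IsMinAtomicDecomp π (U \ {pairSetoid x y}) := by
  have hle : ∀ a ∈ U, a ≠ pairSetoid x y → a ≤ π := by
    intro a ha hne
    obtain ⟨p, q, -, rfl⟩ := (hU.1.1 a ha).exists_eq_pairSetoid
    refine pairSetoid_le_iff.2
      ((sup_pairSetoid_rel (hU.le ha (pairSetoid_rel p q))).resolve_right ?_)
    rintro (⟨hp, hq⟩ | ⟨hp, hq⟩)
    · exact hne (by rw [hx hp (π.refl' x), hy (π.symm' hq) (π.refl' y)])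
    · exact hne (by rw [hy hp (π.refl' y), hx (π.symm' hq) (π.refl' x), pairSetoid_comm])
  have hxyU : pairSetoid x y ∈ U := by_contra fun h => hxy <| pairSetoid_le_iff.1 <|
    (le_sup_right.trans_eq hU.1.2.symm).trans
      (sSup_le fun a ha => hle a ha (ne_of_mem_of_not_mem ha h))
  exact ⟨hxyU, hU.sdiff_pairSetoid hxy hxyU hle⟩

end Extension

section Counting

variable {x y : X} {π : Setoid X} {T : Set (Setoid X)}

instance : Finite (Setoid X) :=
  Finite.of_injective (fun σ : Setoid X => ⇑σ) fun _ _ h =>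
    Setoid.ext fun a b => iff_of_eq (congrFun (congrFun h a) b)

omit [DecidableEq X] in
theorem IsAtomicDecomp.exists_isMinAtomicDecomp_subset (hT : IsAtomicDecomp π T) :
    ∃ S ⊆ T, IsMinAtomicDecomp π S := by
  obtain ⟨S, hST, hS⟩ := exists_minimal_le_of_wellFoundedLT (IsAtomicDecomp π) T hT
  exact ⟨S, hST, isMinAtomicDecomp_iff_minimal.2 hS⟩

omit [DecidableEq X] in
theorem exists_isMinAtomicDecomp (π : Setoid X) : ∃ S, IsMinAtomicDecomp π S := by
  obtain ⟨T, hπ, hT⟩ := eq_sSup_atoms π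
  obtain ⟨S, -, hS⟩ := IsAtomicDecomp.exists_isMinAtomicDecomp_subset ⟨hT, hπ.symm⟩
  exact ⟨S, hS⟩

theorem exists_isMinAtomicDecomp_sup_pairSetoid_of_nontrivial (hxy : ¬ π x y)
    (hx : {p | π p x}.Nontrivial) :
    ∃ U, IsMinAtomicDecomp (π ⊔ pairSetoid x y) U ∧
      ∃ b ∈ U, ∃ c ∈ U, b ≠ c ∧ ¬ b ≤ π ∧ ¬ c ≤ π := by
  obtain ⟨u, hu, x₂, hx₂, hux₂⟩ := hx
  obtain ⟨S, hS⟩ := exists_isMinAtomicDecomp π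
  obtain ⟨a, haS, v, hvu, hav⟩ :=
    exists_mem_rel_ne_of_sSup_rel (hS.1.2 ▸ π.trans' hu (π.symm' hx₂)) hux₂
  obtain rfl := (hS.1.1 a haS).eq_pairSetoid hvu.symm hav
  have hv : π v x := π.trans' (π.symm' (hS.le haS hav)) hu
  have hnot : ∀ {w}, π w x → ¬ π w y := fun hw => Setoid.not_rel_of_rel_of_rel hxy hw (π.refl' y)
  obtain ⟨U, hUT, hU⟩ := (hS.1.exchange haS hu hxy).exists_isMinAtomicDecomp_subset
  -- by minimality of `S`, the atoms `S \ {pairSetoid u v}` and one new atom fall short of `π`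
  have hkeep : ∀ {w}, π w x → ¬ U ⊆ insert (pairSetoid w y) (S \ {pairSetoid u v}) :=
    fun {w} hw hUw => hS.not_le_pairSetoid_sup_sSup_diff haS (hnot hw) <| calc
      π ≤ π ⊔ pairSetoid x y := le_sup_left
      _ = sSup U := hU.1.2.symm
      _ ≤ _ := (sSup_le_sSup hUw).trans sSup_insert.le
  have huy : pairSetoid u y ∈ U := by_contra fun h => hkeep hv fun b hb => by
    rcases hUT hb with rfl | hb'
    exacts [absurd hb h, hb']
  have hvy : pairSetoid v y ∈ U := by_contra fun h => hkeep hu fun b hb => by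
    rcases hUT hb with rfl | rfl | hb'
    exacts [Or.inl rfl, absurd hb h, Or.inr hb']
  refine ⟨U, hU, _, huy, _, hvy, ?_, fun h => hnot hu (pairSetoid_le_iff.1 h),
    fun h => hnot hv (pairSetoid_le_iff.1 h)⟩
  have huy' : u ≠ y := fun h => hnot hu (h ▸ π.refl' u)
  rw [Ne, pairSetoid_inj huy']
  rintro (⟨h, -⟩ | ⟨h, -⟩)
  exacts [hvu h.symm, huy' h]

def extendByPair (t : (X × X) × Set (Setoid X)) : Set (Setoid X) :=
  insert (pairSetoid t.1.1 t.1.2) t.2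

def extensionData (π : Setoid X) (x y : X) : Set ((X × X) × Set (Setoid X)) :=
  ({p | π p x} ×ˢ {q | π q y}) ×ˢ {S | IsMinAtomicDecomp π S}

omit [Fintype X] in
theorem image_extendByPair_subset (hxy : ¬ π x y) :
    extendByPair '' extensionData π x y ⊆ {U | IsMinAtomicDecomp (π ⊔ pairSetoid x y) U} := by
  rintro _ ⟨⟨⟨p, q⟩, S⟩, ⟨⟨hp, hq⟩, hS⟩, rfl⟩
  have h := hS.insert_pairSetoid (Setoid.not_rel_of_rel_of_rel hxy hp hq)
  rwa [sup_pairSetoid_eq_of_rel hp hq] at h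

omit [Fintype X] in
theorem injOn_extendByPair (hxy : ¬ π x y) : Set.InjOn extendByPair (extensionData π x y) := by
  rintro ⟨⟨p, q⟩, S⟩ ⟨⟨hp : π p x, hq : π q y⟩, hS : IsMinAtomicDecomp π S⟩
    ⟨⟨p', q'⟩, S'⟩ ⟨⟨hp' : π p' x, hq' : π q' y⟩, hS' : IsMinAtomicDecomp π S'⟩ h
  change insert (pairSetoid p q) S = insert (pairSetoid p' q') S' at h
  have hnotMem : ∀ {p q S}, π p x → π q y → IsMinAtomicDecomp π S → pairSetoid p q ∉ S :=
    fun hp hq hS h => Setoid.not_rel_of_rel_of_rel hxy hp hq (pairSetoid_le_iff.1 (hS.le h))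
  have he : pairSetoid p q = pairSetoid p' q' :=
    (h ▸ Set.mem_insert _ _ : pairSetoid p q ∈ insert (pairSetoid p' q') S').resolve_right
      (hnotMem hp hq hS')
  obtain ⟨rfl, rfl⟩ : p = p' ∧ q = q' := by
    refine ((pairSetoid_inj fun h => ?_).1 he).resolve_right fun ⟨h, _⟩ => ?_
    · exact Setoid.not_rel_of_rel_of_rel hxy hp hq (h ▸ π.refl' p)
    · exact Setoid.not_rel_of_rel_of_rel hxy hp hq' (h ▸ π.refl' p)
  have hSS : S = S' := by
    rw [← Set.insert_sdiff_self_of_notMem (hnotMem hp hq hS),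
      ← Set.insert_sdiff_self_of_notMem (hnotMem hp hq hS')]
    exact congrArg (· \ {pairSetoid p q}) h
  rw [hSS]

theorem image_extendByPair_eq_iff (hxy : ¬ π x y) :
    extendByPair '' extensionData π x y = {U | IsMinAtomicDecomp (π ⊔ pairSetoid x y) U} ↔
      {p | π p x}.Subsingleton ∧ {q | π q y}.Subsingleton := by
  refine ⟨fun h => ?_, fun ⟨hx, hy⟩ => (image_extendByPair_subset hxy).antisymm fun U hU => ?_⟩
  · have hone : ∀ U, IsMinAtomicDecomp (π ⊔ pairSetoid x y) U →
        ∀ b ∈ U, ∀ c ∈ U, ¬ b ≤ π → ¬ c ≤ π → b = c := by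
      intro U hU b hb c hc hbπ hcπ
      obtain ⟨⟨⟨p, q⟩, S⟩, ⟨-, hS⟩, rfl⟩ := (h.symm ▸ hU : U ∈ extendByPair '' extensionData π x y)
      exact (hb.resolve_right fun h => hbπ (hS.le h)).trans
        (hc.resolve_right fun h => hcπ (hS.le h)).symm
    refine ⟨Set.not_nontrivial_iff.1 fun hx => ?_, Set.not_nontrivial_iff.1 fun hy => ?_⟩
    · obtain ⟨U, hU, b, hb, c, hc, hbc, hbπ, hcπ⟩ :=
        exists_isMinAtomicDecomp_sup_pairSetoid_of_nontrivial hxy hx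
      exact hbc (hone U hU b hb c hc hbπ hcπ)
    · obtain ⟨U, hU, b, hb, c, hc, hbc, hbπ, hcπ⟩ :=
        exists_isMinAtomicDecomp_sup_pairSetoid_of_nontrivial (fun h => hxy (π.symm' h)) hy
      rw [pairSetoid_comm] at hU
      exact hbc (hone U hU b hb c hc hbπ hcπ)
  · obtain ⟨hxyU, hS⟩ := IsMinAtomicDecomp.pairSetoid_mem_of_subsingleton hU hxy hx hy
    exact ⟨((x, y), U \ {pairSetoid x y}), ⟨⟨π.refl' x, π.refl' y⟩, hS⟩,
      Set.insert_sdiff_singleton.trans (Set.insert_eq_of_mem hxyU)⟩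

theorem numMinDecomp_sup_pairSetoid (hxy : ¬ π x y) :
    {p | π p x}.ncard * {q | π q y}.ncard * numMinDecomp π ≤ numMinDecomp (π ⊔ pairSetoid x y) ∧
      (numMinDecomp (π ⊔ pairSetoid x y) = {p | π p x}.ncard * {q | π q y}.ncard * numMinDecomp π ↔
        {p | π p x}.ncard = 1 ∧ {q | π q y}.ncard = 1) := by
  have hcard : (extendByPair '' extensionData π x y).ncard =
      {p | π p x}.ncard * {q | π q y}.ncard * numMinDecomp π := by
    rw [(injOn_extendByPair hxy).ncard_image, extensionData, Set.ncard_prod,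
      Set.ncard_prod]
    rfl
  have hsub := image_extendByPair_subset hxy
  rw [← hcard, Set.ncard_eq_one_iff_subsingleton_of_mem (s := {p | π p x}) (π.refl' x),
    Set.ncard_eq_one_iff_subsingleton_of_mem (s := {q | π q y}) (π.refl' y),
    ← image_extendByPair_eq_iff hxy]
  exact ⟨Set.ncard_le_ncard hsub, fun h => Set.eq_of_subset_of_ncard_le hsub h.le, fun h => h ▸ rfl⟩

end Counting

/-- If `π'` covers `π` by merging blocks `Bi` and `Bj` of `π`, then
`𝔑(π') ≥ |Bi|·|Bj|·𝔑(π)`, with equality iff both `Bi` and `Bj` are singletons. -/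
theorem numMinDecomp_cover (π π' : Setoid X) (Bi Bj : Set X)
    (hcov : π ⋖ π') (hBi : Bi ∈ π.classes) (hBj : Bj ∈ π.classes) (hne : Bi ≠ Bj)
    (hmerge : π'.classes = insert (Bi ∪ Bj) (π.classes \ {Bi, Bj})) :
    Set.ncard Bi * Set.ncard Bj * numMinDecomp π ≤ numMinDecomp π' ∧
      (numMinDecomp π' = Set.ncard Bi * Set.ncard Bj * numMinDecomp π ↔
        Set.ncard Bi = 1 ∧ Set.ncard Bj = 1) := by
  obtain ⟨x, rfl⟩ := hBi
  obtain ⟨y, rfl⟩ := hBj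
  have hxy : ¬ π x y := fun h =>
    hne (Set.ext fun p => ⟨fun hp => π.trans' hp h, fun hp => π.trans' hp (π.symm' h)⟩)
  have hπ'xy : π' x y := (Setoid.rel_iff_exists_classes π').2
    ⟨_, hmerge ▸ Set.mem_insert _ _, Or.inl (π.refl' x), Or.inr (π.refl' y)⟩
  have hπ' : π ⊔ pairSetoid x y = π' := by
    refine (hcov.eq_or_eq le_sup_left (sup_le hcov.le (pairSetoid_le_iff.2 hπ'xy))).resolve_left ?_
    exact fun h => hxy (pairSetoid_le_iff.1 (h ▸ le_sup_right))
  subst hπ'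
  exact numMinDecomp_sup_pairSetoid hxy
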